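/- Let p be a point with consecutive Delaunay neighbours r and q in a cone C_i^p of width π/3, with (p,q) clockwise from (p,r). If q lies in the cone C_i^r (the translate of C_i to apex r), then every Delaunay neighbour t of p in C_i^p appearing after q in clockwise order satisfies a bisector distance [pt] > [pq]. -/

import Mathlib

open Real EuclideanGeometry
open scoped InnerProductSpace

/-- The bisector direction of cone Cᵢ: cones C₀,…,C₅ of width π/3 are numbered clockwise
starting from the topmost cone, so the bisector of Cᵢ makes angle π/2 − i·π/3 with the
positive x-axis. -/
noncomputable def coneDir (i : ℕ) : EuclideanSpace ℝ (Fin 2) :=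
  !₂[Real.cos (π / 2 - i * π / 3), Real.sin (π / 2 - i * π / 3)]

/-- `pt` lies in the (open) cone Cᵢ of apex `apex`. -/
def InCone (i : ℕ) (apex pt : EuclideanSpace ℝ (Fin 2)) : Prop :=
  pt ≠ apex ∧ InnerProductGeometry.angle (pt - apex) (coneDir i) < π / 6

/-- The planar cross product; `cross2 v w < 0` means w is clockwise from v. -/
noncomputable def cross2 (v w : EuclideanSpace ℝ (Fin 2)) : ℝ :=
  v 0 * w 1 - v 1 * w 0

/-- (u,v) is a Delaunay edge of the point set P. -/
def DelaunayEdge (P : Finset (EuclideanSpace ℝ (Fin 2)))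
    (u v : EuclideanSpace ℝ (Fin 2)) : Prop :=
  ∃ (c : EuclideanSpace ℝ (Fin 2)) (ρ : ℝ),
    dist c u = ρ ∧ dist c v = ρ ∧ ∀ t ∈ P, t ≠ u → t ≠ v → ρ < dist c t

/-- General position: no three points of P are collinear and no four are concyclic. -/
def GenPos (P : Finset (EuclideanSpace ℝ (Fin 2))) : Prop :=
  (∀ a ∈ P, ∀ b ∈ P, ∀ c ∈ P, a ≠ b → a ≠ c → b ≠ c →
    ¬ Collinear ℝ ({a, b, c} : Set (EuclideanSpace ℝ (Fin 2)))) ∧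
  (∀ a ∈ P, ∀ b ∈ P, ∀ c ∈ P, ∀ d ∈ P,
    a ≠ b → a ≠ c → a ≠ d → b ≠ c → b ≠ d → c ≠ d →
    ¬ ∃ (o : EuclideanSpace ℝ (Fin 2)) (ρ : ℝ),
      dist o a = ρ ∧ dist o b = ρ ∧ dist o c = ρ ∧ dist o d = ρ)

set_option maxHeartbeats 1000000

/-- linearize the cone condition -/
lemma cone_lin (s x y : ℝ) (hs : s^2 = 3) (h : 3*x^2 < y^2) (h0 : 0 < y) :
    s*x < y ∧ -y < s*x := by
  have hsx : s^2*x^2 = 3*x^2 := by linear_combination x^2*hs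
  have key : 0 < (y - s*x)*(y + s*x) := by nlinarith only [h, hsx]
  constructor
  · nlinarith only [key, h0]
  · nlinarith only [key, h0]

/-- final contradiction from the convexity identity -/
lemma jensen_contra (D M N F FT nq nw sq2 : ℝ)
    (hD : D < 0) (hM : M < 0) (hN : N < 0)
    (hMND : 0 ≤ M+3*N-D) (hF : F < 0) (hFT : 0 < FT)
    (hnq : 0 ≤ nq) (hnw : 0 ≤ nw) (hsq : 0 ≤ sq2)
    (hKEY : D^2*FT = 3*N*D*F + (M+3*N-D)*(M*nq+3*N*nw) - 3*M*N*sq2) :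
    False := by
  have t1 : 3*N*D*F < 0 := by
    have h1 : 0 < N*D := mul_pos_of_neg_of_neg hN hD
    nlinarith only [h1, hF]
  have t2 : (M+3*N-D)*(M*nq+3*N*nw) ≤ 0 := by
    apply mul_nonpos_of_nonneg_of_nonpos hMND
    have n1 : M*nq ≤ 0 := mul_nonpos_of_nonpos_of_nonneg (le_of_lt hM) hnq
    have n2 : N*nw ≤ 0 := mul_nonpos_of_nonpos_of_nonneg (le_of_lt hN) hnw
    linarith only [n1, n2]
  have t3 : 0 ≤ 3*M*N*sq2 := by
    have h1 : 0 < M*N := mul_pos_of_neg_of_neg hM hN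
    nlinarith only [h1, hsq]
  have hDsq : 0 < D^2 := by nlinarith only [hD]
  have hD2 : 0 < D^2*FT := mul_pos hDsq hFT
  nlinarith only [hD2, t1, t2, t3, hKEY]

/-- sign flip: F * c = R, c < 0, R > 0 implies F < 0 -/
lemma sign_flip (F c R : ℝ) (hc : c < 0) (hR : 0 < R) (h : F*c = R) : F < 0 := by
  by_contra h0
  push_neg at h0
  nlinarith only [mul_nonpos_of_nonneg_of_nonpos h0 (le_of_lt hc), h, hR]

lemma core_real (s xr yr xq yq xt yt xo yo : ℝ)
    (hs : s^2 = 3) (hs0 : 0 < s)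
    (hR : 3*xr^2 < yr^2) (hR0 : 0 < yr)
    (hQ : 3*xq^2 < yq^2) (hQ0 : 0 < yq)
    (hT : 3*xt^2 < yt^2) (hT0 : 0 < yt)
    (hQR : 3*(xq-xr)^2 < (yq-yr)^2) (hQR0 : yr < yq)
    (hcw : xr*yq - yr*xq < 0)
    (haf : xq*yt - yq*xt < 0)
    (er : (xo-xr)^2+(yo-yr)^2 = xo^2+yo^2)
    (eq2 : (xo-xq)^2+(yo-yq)^2 = xo^2+yo^2)
    (et : xo^2+yo^2 < (xo-xt)^2+(yo-yt)^2) :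
    yq < yt := by
  by_contra hle
  push_neg at hle   -- hle : yt ≤ yq
  obtain ⟨lR1, lR2⟩ := cone_lin s xr yr hs hR hR0
  obtain ⟨lQ1, lQ2⟩ := cone_lin s xq yq hs hQ hQ0
  obtain ⟨lT1, lT2⟩ := cone_lin s xt yt hs hT hT0
  obtain ⟨lQR1, lQR2⟩ := cone_lin s (xq-xr) (yq-yr) hs hQR (by linarith only [hQR0])
  -- the G inequality
  have hFact : 3*((xr^2+yr^2)*(yq-s*xq) + (xq^2+yq^2)*(s*xr-yr) - (4*s/3)*yq*(xr*yq-yr*xq))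
      = (yq-s*xq)*(2*yr*((yr-yq)-s*(xr-xq)) + (yr+s*xr)*((yr-yq)+s*(xr-xq))) := by
    linear_combination (s*xr^2*xq - s*xr*xq^2 - xr^2*yq + yr*xq^2) * hs
  have hG : (xr^2+yr^2)*(yq-s*xq) + (xq^2+yq^2)*(s*xr-yr) - (4*s/3)*yq*(xr*yq-yr*xq) < 0 := by
    have h1 : 0 < yq - s*xq := by linarith only [lQ1]
    have h2 : (yr-yq)-s*(xr-xq) < 0 := by linarith only [lQR1]
    have h3 : (yr-yq)+s*(xr-xq) < 0 := by linarith only [lQR2]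
    have h4 : 0 < yr + s*xr := by linarith only [lR2]
    have p1 : 0 < yq - s*xq := h1
    have m1 : 2*yr*((yr-yq)-s*(xr-xq)) < 0 :=
      mul_neg_of_pos_of_neg (by linarith only [hR0]) h2
    have m2 : (yr+s*xr)*((yr-yq)+s*(xr-xq)) < 0 := mul_neg_of_pos_of_neg h4 h3
    have m3 : (yq-s*xq)*(2*yr*((yr-yq)-s*(xr-xq)) + (yr+s*xr)*((yr-yq)+s*(xr-xq))) < 0 :=
      mul_neg_of_pos_of_neg p1 (by linarith only [m1, m2])
    linarith only [hFact, m3]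
  -- circumcenter linear relations
  have hOr : 2*(xo*xr+yo*yr) = xr^2+yr^2 := by linear_combination -er
  have hOq : 2*(xo*xq+yo*yq) = xq^2+yq^2 := by linear_combination -eq2
  have hx : 2*(xr*yq-yr*xq)*xo = (xr^2+yr^2)*yq - (xq^2+yq^2)*yr := by
    linear_combination yq*hOr - yr*hOq
  have hy : 2*(xr*yq-yr*xq)*yo = (xq^2+yq^2)*xr - (xr^2+yr^2)*xq := by
    linear_combination xr*hOq - xq*hOr
  -- W := (s*yq/3, yq) lies in the closed disk
  have hSkey : (((s*yq/3)^2+yq^2) - 2*(xo*(s*yq/3)+yo*yq)) * ((2*(xr*yq-yr*xq)) * s)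
      = (2*yq)*(-((xr^2+yr^2)*(yq-s*xq) + (xq^2+yq^2)*(s*xr-yr) - (4*s/3)*yq*(xr*yq-yr*xq))) := by
    linear_combination (-(2:ℝ)*s*(s*yq/3))*hx + (-(2:ℝ)*s*yq)*hy +
      ((2:ℝ)/9*s*xr*yq^3 - 2/9*s*yr*xq*yq^2 - 2/3*xr^2*yq^2 - 2/3*yr^2*yq^2
        + 2/3*yr*xq^2*yq + 2/3*yr*yq^3) * hs
  have hfW : (((s*yq/3)^2+yq^2) - 2*(xo*(s*yq/3)+yo*yq)) < 0 := by
    refine sign_flip _ _ _ ?_ ?_ hSkey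
    · exact mul_neg_of_neg_of_pos (by linarith only [hcw]) hs0
    · exact mul_pos (by linarith only [hQ0]) (by linarith only [hG])
  -- barycentric quantities
  have hDneg : yq*(3*xq - s*yq) < 0 :=
    mul_neg_of_pos_of_neg hQ0 (by nlinarith only [lQ1, hs, hQ0, hs0])
  have hMneg : yq*(3*xt - s*yt) < 0 :=
    mul_neg_of_pos_of_neg hQ0 (by nlinarith only [lT1, hs, hT0, hs0])
  have hDT2 : (yq*(3*xq - s*yq))*yt = ((yq*(3*xt - s*yt))+3*(xq*yt - yq*xt))*yq := by ring
  have hMND : 0 ≤ (yq*(3*xt - s*yt))+3*(xq*yt - yq*xt)-(yq*(3*xq - s*yq)) := by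
    have h2 : 0 ≤ (yq*(3*xq - s*yq))*(yt-yq) := by nlinarith only [hDneg, hle]
    nlinarith only [h2, hDT2, hQ0]
  -- convexity identity
  have hKEY : (yq*(3*xq - s*yq))^2*((xt^2+yt^2) - 2*(xo*xt+yo*yt)) =
      3*(xq*yt - yq*xt)*(yq*(3*xq - s*yq))*((((s*yq/3)^2+yq^2) - 2*(xo*(s*yq/3)+yo*yq)))
      + ((yq*(3*xt - s*yt))+3*(xq*yt - yq*xt)-(yq*(3*xq - s*yq)))
          *((yq*(3*xt - s*yt))*(xq^2+yq^2)+3*(xq*yt - yq*xt)*((s*yq/3)^2+yq^2))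
      - 3*(yq*(3*xt - s*yt))*(xq*yt - yq*xt)*(xq-s*yq/3)^2 := by
    linear_combination (-((yq*(3*xq - s*yq))*(yq*(3*xt - s*yt))))*hOq
  have hFT : 0 < (xt^2+yt^2) - 2*(xo*xt+yo*yt) := by nlinarith only [et]
  exact jensen_contra (yq*(3*xq - s*yq)) (yq*(3*xt - s*yt)) (xq*yt - yq*xt)
    _ _ (xq^2+yq^2) ((s*yq/3)^2+yq^2) ((xq-s*yq/3)^2)
    hDneg hMneg haf hMND hfW hFT (by positivity) (by positivity) (by positivity) hKEY

lemma inner2 (v w : EuclideanSpace ℝ (Fin 2)) : ⟪v, w⟫_ℝ = v 0 * w 0 + v 1 * w 1 := by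
  simp [PiLp.inner_apply, Fin.sum_univ_two, RCLike.inner_apply, conj_trivial]
  ring

lemma normsq2 (v : EuclideanSpace ℝ (Fin 2)) : ‖v‖^2 = v 0 ^2 + v 1 ^2 := by
  rw [← real_inner_self_eq_norm_sq, inner2]; ring

lemma dist_sq2 (a b : EuclideanSpace ℝ (Fin 2)) :
    (dist a b)^2 = (a 0 - b 0)^2 + (a 1 - b 1)^2 := by
  rw [EuclideanSpace.dist_eq, Real.sq_sqrt (by positivity)]
  simp [Fin.sum_univ_two, Real.dist_eq, sq_abs]

lemma cone_coord (v d : EuclideanSpace ℝ (Fin 2)) (hv : v ≠ 0) (hd : ‖d‖ = 1)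
    (h : InnerProductGeometry.angle v d < π/6) :
    Real.sqrt 3 / 2 * ‖v‖ < ⟪v, d⟫_ℝ := by
  have hnv : 0 < ‖v‖ := norm_pos_iff.mpr hv
  have hcos := InnerProductGeometry.cos_angle (x := v) (y := d)
  have hmono : Real.cos (π/6) < Real.cos (InnerProductGeometry.angle v d) :=
    Real.cos_lt_cos_of_nonneg_of_le_pi (InnerProductGeometry.angle_nonneg v d)
      (by linarith [Real.pi_pos]) h
  rw [Real.cos_pi_div_six] at hmono
  rw [hcos, hd, mul_one] at hmono
  exact (lt_div_iff₀ hnv).mp hmono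

lemma cone_xy (d0 d1 v0 v1 nv : ℝ) (hd : d0^2+d1^2 = 1) (hnv : 0 < nv)
    (hnv2 : nv^2 = v0^2+v1^2)
    (hY : Real.sqrt 3/2*nv < v0*d0+v1*d1) :
    0 < v0*d0+v1*d1 ∧ 3*(v0*d1-v1*d0)^2 < (v0*d0+v1*d1)^2 := by
  have hs3 : Real.sqrt 3 ^2 = 3 := Real.sq_sqrt (by norm_num)
  have hy0 : 0 < v0*d0+v1*d1 := lt_of_le_of_lt (by positivity) hY
  have ha : 0 ≤ Real.sqrt 3/2*nv := by positivity
  have hsq : (Real.sqrt 3/2*nv)^2 < (v0*d0+v1*d1)^2 := by nlinarith only [hY, ha]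
  have hXY : (v0*d1-v1*d0)^2 + (v0*d0+v1*d1)^2 = v0^2+v1^2 := by
    linear_combination (v0^2+v1^2)*hd
  exact ⟨hy0, by nlinarith only [hsq, hXY, hnv2, hs3, sq_nonneg nv]⟩

lemma sub2 (a b : EuclideanSpace ℝ (Fin 2)) (j : Fin 2) : (a - b) j = a j - b j := rfl


/-- Let r and q be consecutive Delaunay neighbours of p in the cone Cᵢᵖ
(so that (p,r,q) is a Delaunay triangle), with (p,q) clockwise from (p,r).  If q lies in
the cone Cᵢʳ, then every Delaunay neighbour t of p in Cᵢᵖ that is clockwise from q has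
bisector distance [pt] > [pq], where the bisector distance is the inner product with the
cone's (unit) bisector direction. -/
theorem clockwise_neighbours_longer
    (P : Finset (EuclideanSpace ℝ (Fin 2)))
    (p r q t : EuclideanSpace ℝ (Fin 2)) (i : ℕ)
    (hp : p ∈ P) (hr : r ∈ P) (hq : q ∈ P) (ht : t ∈ P)
    (hgp : GenPos P)
    (hri : InCone i p r) (hqi : InCone i p q) (hti : InCone i p t)
    (hcw : cross2 (r - p) (q - p) < 0)
    (hcons : ∃ (o : EuclideanSpace ℝ (Fin 2)) (ρ : ℝ),
      dist o p = ρ ∧ dist o r = ρ ∧ dist o q = ρ ∧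
      ∀ s ∈ P, s ≠ p → s ≠ r → s ≠ q → ρ < dist o s)
    (hqr : InCone i r q)
    (hpt : DelaunayEdge P p t)
    (hafter : cross2 (q - p) (t - p) < 0) :
    ⟪q - p, coneDir i⟫_ℝ < ⟪t - p, coneDir i⟫_ℝ := by

  have hs : Real.sqrt 3 ^ 2 = 3 := Real.sq_sqrt (by norm_num)
  have hs0 : (0:ℝ) < Real.sqrt 3 := by positivity
  have hd : (coneDir i 0)^2 + (coneDir i 1)^2 = 1 := by
    simp only [coneDir, Matrix.cons_val_zero, Matrix.cons_val_one, Matrix.head_cons]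
    exact Real.cos_sq_add_sin_sq _
  have hdn : ‖coneDir i‖ = 1 := by
    have h2 : ‖coneDir i‖^2 = 1 := by rw [normsq2]; exact hd
    have h3 := norm_nonneg (coneDir i)
    nlinarith only [h2, h3]
  have hri2 := hri
  have hqi2 := hqi
  have hti2 := hti
  have hqr2 := hqr
  have hne_ri : r - p ≠ 0 := sub_ne_zero_of_ne hri2.1
  have hY_ri := cone_coord (r-p) (coneDir i) hne_ri hdn hri2.2
  have hY'_ri : Real.sqrt 3/2*‖r-p‖ < (r 0 - p 0)*coneDir i 0 + (r 1 - p 1)*coneDir i 1 := by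
    rw [inner2] at hY_ri; simpa only [sub2] using hY_ri
  have hnv2_ri : ‖r-p‖^2 = (r 0 - p 0)^2 + (r 1 - p 1)^2 := by
    rw [normsq2]; simp only [sub2]
  have hc_ri := cone_xy (coneDir i 0) (coneDir i 1) (r 0 - p 0) (r 1 - p 1) ‖r-p‖ hd
    (norm_pos_iff.mpr hne_ri) hnv2_ri hY'_ri
  have hne_qi : q - p ≠ 0 := sub_ne_zero_of_ne hqi2.1
  have hY_qi := cone_coord (q-p) (coneDir i) hne_qi hdn hqi2.2
  have hY'_qi : Real.sqrt 3/2*‖q-p‖ < (q 0 - p 0)*coneDir i 0 + (q 1 - p 1)*coneDir i 1 := by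
    rw [inner2] at hY_qi; simpa only [sub2] using hY_qi
  have hnv2_qi : ‖q-p‖^2 = (q 0 - p 0)^2 + (q 1 - p 1)^2 := by
    rw [normsq2]; simp only [sub2]
  have hc_qi := cone_xy (coneDir i 0) (coneDir i 1) (q 0 - p 0) (q 1 - p 1) ‖q-p‖ hd
    (norm_pos_iff.mpr hne_qi) hnv2_qi hY'_qi
  have hne_ti : t - p ≠ 0 := sub_ne_zero_of_ne hti2.1
  have hY_ti := cone_coord (t-p) (coneDir i) hne_ti hdn hti2.2
  have hY'_ti : Real.sqrt 3/2*‖t-p‖ < (t 0 - p 0)*coneDir i 0 + (t 1 - p 1)*coneDir i 1 := by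
    rw [inner2] at hY_ti; simpa only [sub2] using hY_ti
  have hnv2_ti : ‖t-p‖^2 = (t 0 - p 0)^2 + (t 1 - p 1)^2 := by
    rw [normsq2]; simp only [sub2]
  have hc_ti := cone_xy (coneDir i 0) (coneDir i 1) (t 0 - p 0) (t 1 - p 1) ‖t-p‖ hd
    (norm_pos_iff.mpr hne_ti) hnv2_ti hY'_ti
  have hne_qr : q - r ≠ 0 := sub_ne_zero_of_ne hqr2.1
  have hY_qr := cone_coord (q-r) (coneDir i) hne_qr hdn hqr2.2
  have hY'_qr : Real.sqrt 3/2*‖q-r‖ < (q 0 - r 0)*coneDir i 0 + (q 1 - r 1)*coneDir i 1 := by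
    rw [inner2] at hY_qr; simpa only [sub2] using hY_qr
  have hnv2_qr : ‖q-r‖^2 = (q 0 - r 0)^2 + (q 1 - r 1)^2 := by
    rw [normsq2]; simp only [sub2]
  have hc_qr := cone_xy (coneDir i 0) (coneDir i 1) (q 0 - r 0) (q 1 - r 1) ‖q-r‖ hd
    (norm_pos_iff.mpr hne_qr) hnv2_qr hY'_qr

  -- t is distinct from p, r, q
  have tnp : t ≠ p := hti2.1
  have tnq : t ≠ q := by
    intro h
    rw [h] at hafter
    have h0 : cross2 (q - p) (q - p) = 0 := by unfold cross2; ring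
    linarith only [hafter, h0]
  have tnr : t ≠ r := by
    intro h
    rw [h] at hafter
    have h0 : cross2 (q - p) (r - p) = -cross2 (r - p) (q - p) := by unfold cross2; ring
    linarith only [hafter, hcw, h0]
  -- the circumscribed circle
  obtain ⟨o, ρ, e1, e2, e3, e4⟩ := hcons
  have hρ : 0 ≤ ρ := e1 ▸ dist_nonneg
  have dp : (o 0 - p 0)^2 + (o 1 - p 1)^2 = ρ^2 := by rw [← dist_sq2, e1]
  have dr : (o 0 - r 0)^2 + (o 1 - r 1)^2 = ρ^2 := by rw [← dist_sq2, e2]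
  have dq : (o 0 - q 0)^2 + (o 1 - q 1)^2 = ρ^2 := by rw [← dist_sq2, e3]
  have dt : ρ^2 < (o 0 - t 0)^2 + (o 1 - t 1)^2 := by
    have h4 := e4 t ht tnp tnr tnq
    rw [← dist_sq2]
    exact pow_lt_pow_left₀ h4 hρ (by norm_num)
  -- cross products in rotated coordinates
  have cwc : ((r 0 - p 0)*coneDir i 1 - (r 1 - p 1)*coneDir i 0)*((q 0 - p 0)*coneDir i 0 + (q 1 - p 1)*coneDir i 1)
      - ((r 0 - p 0)*coneDir i 0 + (r 1 - p 1)*coneDir i 1)*((q 0 - p 0)*coneDir i 1 - (q 1 - p 1)*coneDir i 0)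
      = cross2 (r - p) (q - p) := by
    rw [show cross2 (r-p) (q-p) = (r 0 - p 0)*(q 1 - p 1) - (r 1 - p 1)*(q 0 - p 0) from rfl]
    linear_combination ((r 0 - p 0)*(q 1 - p 1) - (r 1 - p 1)*(q 0 - p 0))*hd
  have afc : ((q 0 - p 0)*coneDir i 1 - (q 1 - p 1)*coneDir i 0)*((t 0 - p 0)*coneDir i 0 + (t 1 - p 1)*coneDir i 1)
      - ((q 0 - p 0)*coneDir i 0 + (q 1 - p 1)*coneDir i 1)*((t 0 - p 0)*coneDir i 1 - (t 1 - p 1)*coneDir i 0)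
      = cross2 (q - p) (t - p) := by
    rw [show cross2 (q-p) (t-p) = (q 0 - p 0)*(t 1 - p 1) - (q 1 - p 1)*(t 0 - p 0) from rfl]
    linear_combination ((q 0 - p 0)*(t 1 - p 1) - (q 1 - p 1)*(t 0 - p 0))*hd
  -- circle equations in rotated coordinates
  have exo : ((o 0 - p 0)*coneDir i 1 - (o 1 - p 1)*coneDir i 0)^2 + ((o 0 - p 0)*coneDir i 0 + (o 1 - p 1)*coneDir i 1)^2 = ρ^2 := by
    linear_combination dp + ((o 0 - p 0)^2 + (o 1 - p 1)^2)*hd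
  have exr : (((o 0 - p 0)*coneDir i 1 - (o 1 - p 1)*coneDir i 0) - ((r 0 - p 0)*coneDir i 1 - (r 1 - p 1)*coneDir i 0))^2
      + (((o 0 - p 0)*coneDir i 0 + (o 1 - p 1)*coneDir i 1) - ((r 0 - p 0)*coneDir i 0 + (r 1 - p 1)*coneDir i 1))^2 = ρ^2 := by
    linear_combination dr + ((o 0 - r 0)^2 + (o 1 - r 1)^2)*hd
  have exq : (((o 0 - p 0)*coneDir i 1 - (o 1 - p 1)*coneDir i 0) - ((q 0 - p 0)*coneDir i 1 - (q 1 - p 1)*coneDir i 0))^2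
      + (((o 0 - p 0)*coneDir i 0 + (o 1 - p 1)*coneDir i 1) - ((q 0 - p 0)*coneDir i 0 + (q 1 - p 1)*coneDir i 1))^2 = ρ^2 := by
    linear_combination dq + ((o 0 - q 0)^2 + (o 1 - q 1)^2)*hd
  have ext : ρ^2 < (((o 0 - p 0)*coneDir i 1 - (o 1 - p 1)*coneDir i 0) - ((t 0 - p 0)*coneDir i 1 - (t 1 - p 1)*coneDir i 0))^2
      + (((o 0 - p 0)*coneDir i 0 + (o 1 - p 1)*coneDir i 1) - ((t 0 - p 0)*coneDir i 0 + (t 1 - p 1)*coneDir i 1))^2 := by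
    have h5 : (((o 0 - p 0)*coneDir i 1 - (o 1 - p 1)*coneDir i 0) - ((t 0 - p 0)*coneDir i 1 - (t 1 - p 1)*coneDir i 0))^2
      + (((o 0 - p 0)*coneDir i 0 + (o 1 - p 1)*coneDir i 1) - ((t 0 - p 0)*coneDir i 0 + (t 1 - p 1)*coneDir i 1))^2
      = (o 0 - t 0)^2 + (o 1 - t 1)^2 := by
      linear_combination ((o 0 - t 0)^2 + (o 1 - t 1)^2)*hd
    linarith only [dt, h5]
  -- apply the core lemma
  have main := core_real (Real.sqrt 3)
    ((r 0 - p 0)*coneDir i 1 - (r 1 - p 1)*coneDir i 0) ((r 0 - p 0)*coneDir i 0 + (r 1 - p 1)*coneDir i 1)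
    ((q 0 - p 0)*coneDir i 1 - (q 1 - p 1)*coneDir i 0) ((q 0 - p 0)*coneDir i 0 + (q 1 - p 1)*coneDir i 1)
    ((t 0 - p 0)*coneDir i 1 - (t 1 - p 1)*coneDir i 0) ((t 0 - p 0)*coneDir i 0 + (t 1 - p 1)*coneDir i 1)
    ((o 0 - p 0)*coneDir i 1 - (o 1 - p 1)*coneDir i 0) ((o 0 - p 0)*coneDir i 0 + (o 1 - p 1)*coneDir i 1)
    hs hs0 hc_ri.2 hc_ri.1 hc_qi.2 hc_qi.1 hc_ti.2 hc_ti.1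
    (by linarith only [hc_qr.2]) (by linarith only [hc_qr.1])
    (by linarith only [cwc, hcw]) (by linarith only [afc, hafter])
    (by linarith only [exr, exo]) (by linarith only [exq, exo])
    (by linarith only [exo, ext])
  rw [inner2, inner2]
  simp only [sub2]
  linarith only [main]
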